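/- Let f = h + conj(g) be a sense-preserving harmonic mapping on 𝔻 with dilatation ω = g'/h' satisfying |ω| < 1 and h' nonvanishing. Define the harmonic Schwarzian S_f = ∂_z P_f − (1/2) P_f², where P_f = Ph − conj(ω) ω'/(1 − |ω|²). Then at every point of 𝔻: S_f = Sh + (conj(ω)/(1 − |ω|²)) · ( (h''/h') ω' − ω'' ) − (3/2) ( ω' conj(ω)/(1 − |ω|²) )². -/

import Mathlib

open Metric

/-- Wirtinger derivative `∂_z F = (1/2)(∂_x F - i ∂_y F)`. -/
noncomputable def wZ (F : ℂ → ℂ) (z : ℂ) : ℂ :=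
  (fderiv ℝ F z 1 - Complex.I * fderiv ℝ F z Complex.I) / 2

/-- Wirtinger derivative `∂_z̄ F = (1/2)(∂_x F + i ∂_y F)`. -/
noncomputable def wZb (F : ℂ → ℂ) (z : ℂ) : ℂ :=
  (fderiv ℝ F z 1 + Complex.I * fderiv ℝ F z Complex.I) / 2

/-- Pre-Schwarzian derivative `Ph = h''/h'` of a holomorphic function. -/
noncomputable def preSch (h : ℂ → ℂ) (z : ℂ) : ℂ :=
  deriv (deriv h) z / deriv h z

/-- Schwarzian derivative `Sh = (Ph)' - (1/2)(Ph)^2` of a holomorphic function. -/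
noncomputable def schw (h : ℂ → ℂ) (z : ℂ) : ℂ :=
  deriv (preSch h) z - (1 / 2) * (preSch h z) ^ 2

/-- Dilatation `ω = g'/h'` of the harmonic mapping `f = h + conj g`. -/
noncomputable def dil (h g : ℂ → ℂ) (z : ℂ) : ℂ :=
  deriv g z / deriv h z

/-- Harmonic pre-Schwarzian `P_f = Ph - conj(ω) ω' / (1 - |ω|²)`. -/
noncomputable def preSchH (h g : ℂ → ℂ) (z : ℂ) : ℂ :=
  preSch h z -
    (starRingEnd ℂ) (dil h g z) * deriv (dil h g) z / ((1 - ‖dil h g z‖ ^ 2 : ℝ) : ℂ)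

/-- Harmonic Schwarzian `S_f = ∂_z P_f - (1/2) P_f²`. -/
noncomputable def schwH (h g : ℂ → ℂ) (z : ℂ) : ℂ :=
  wZ (preSchH h g) z - (1 / 2) * (preSchH h g z) ^ 2

/-- Denominator `conj ζ - (1/2)(1-|ζ|²) Ph(ζ)` (case A). -/
noncomputable def denA (h : ℂ → ℂ) (ζ : ℂ) : ℂ :=
  (starRingEnd ℂ) ζ - (1 / 2) * ((1 - ‖ζ‖ ^ 2 : ℝ) : ℂ) * preSch h ζ

/-- Denominator `conj ζ - (1/2)(1-|ζ|²) P_f(ζ)` (case B). -/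
noncomputable def denB (h g : ℂ → ℂ) (ζ : ℂ) : ℂ :=
  (starRingEnd ℂ) ζ - (1 / 2) * ((1 - ‖ζ‖ ^ 2 : ℝ) : ℂ) * preSchH h g ζ

/-- `Φ` for case A: `(1-|ζ|²) h'(ζ) / (conj ζ - (1/2)(1-|ζ|²) Ph(ζ))`. -/
noncomputable def phiA (h : ℂ → ℂ) (ζ : ℂ) : ℂ :=
  ((1 - ‖ζ‖ ^ 2 : ℝ) : ℂ) * deriv h ζ / denA h ζ

/-- `Φ` for case B: `(1-|ζ|²) h'(ζ) / (conj ζ - (1/2)(1-|ζ|²) P_f(ζ))`. -/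
noncomputable def phiB (h g : ℂ → ℂ) (ζ : ℂ) : ℂ :=
  ((1 - ‖ζ‖ ^ 2 : ℝ) : ℂ) * deriv h ζ / denB h g ζ

/-- Case A extension value `E_f(ζ) = f(ζ) + Φ(ζ) + conj(ω(ζ)) conj(Φ(ζ))`, `τ = Ph`. -/
noncomputable def extA (h g : ℂ → ℂ) (ζ : ℂ) : ℂ :=
  (h ζ + (starRingEnd ℂ) (g ζ)) + phiA h ζ +
    (starRingEnd ℂ) (dil h g ζ) * (starRingEnd ℂ) (phiA h ζ)

/-- Case B extension value `E_f(ζ) = f(ζ) + Φ(ζ) + conj(ω(ζ)) conj(Φ(ζ))`, `τ = P_f`. -/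
noncomputable def extB (h g : ℂ → ℂ) (ζ : ℂ) : ℂ :=
  (h ζ + (starRingEnd ℂ) (g ζ)) + phiB h g ζ +
    (starRingEnd ℂ) (dil h g ζ) * (starRingEnd ℂ) (phiB h g ζ)


set_option maxHeartbeats 2000000

private lemma norm_cast_conj (c : ℂ) :
    ((1 - ‖c‖ ^ 2 : ℝ) : ℂ) = 1 - c * (starRingEnd ℂ) c := by
  rw [Complex.mul_conj]
  push_cast
  rw [Complex.normSq_eq_norm_sq]
  push_cast
  ring

private lemma one_sub_mul_conj_ne (a : ℂ) (h : ‖a‖ < 1) :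
    (1 : ℂ) - a * (starRingEnd ℂ) a ≠ 0 := by
  rw [Complex.mul_conj]
  intro hc
  have h2 : (Complex.normSq a : ℝ) = 1 := by
    have := sub_eq_zero.mp hc
    exact_mod_cast this.symm
  have h3 : ‖a‖ ^ 2 < 1 := by nlinarith [norm_nonneg a]
  rw [Complex.normSq_eq_norm_sq] at h2
  linarith

private lemma wZ_core (p ω ω2 : ℂ → ℂ) (z p' a' a2 : ℂ)
    (hp : HasDerivAt p p' z) (hω : HasDerivAt ω a' z) (hω2 : HasDerivAt ω2 a2 z)
    (hval : ω2 z = a')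
    (hd : (1 : ℂ) - ω z * (starRingEnd ℂ) (ω z) ≠ 0) :
    wZ (fun w => p w - (starRingEnd ℂ) (ω w) * ω2 w *
        (1 - ω w * (starRingEnd ℂ) (ω w))⁻¹) z
      = p' - (starRingEnd ℂ) (ω z) *
          (a2 * (1 - ω z * (starRingEnd ℂ) (ω z)) + a' * a' * (starRingEnd ℂ) (ω z)) /
          (1 - ω z * (starRingEnd ℂ) (ω z)) ^ 2 := by
  have hωf := hω.hasFDerivAt.restrictScalars ℝ
  have hω2f := hω2.hasFDerivAt.restrictScalars ℝ
  have hpf := hp.hasFDerivAt.restrictScalars ℝ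
  have hcf : HasFDerivAt (fun w => (starRingEnd ℂ) (ω w)) _ z :=
    (Complex.conjCLE.toContinuousLinearMap.hasFDerivAt).comp z hωf
  have hDen := (hωf.mul hcf).const_sub 1
  have hInv : HasFDerivAt (fun w => (1 - ω w * (starRingEnd ℂ) (ω w))⁻¹) _ z :=
    (hasFDerivAt_inv' (𝕜 := ℝ) hd).comp z hDen
  have hN := hcf.mul hω2f
  have hT := hpf.sub (hN.mul hInv)
  have hT' : HasFDerivAt (fun w => p w - (starRingEnd ℂ) (ω w) * ω2 w *
      (1 - ω w * (starRingEnd ℂ) (ω w))⁻¹) _ z := hT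
  rw [wZ, hT'.fderiv]
  simp only [ContinuousLinearMap.sub_apply, ContinuousLinearMap.add_apply,
    ContinuousLinearMap.smul_apply, ContinuousLinearMap.comp_apply,
    ContinuousLinearMap.coe_comp', Function.comp_apply,
    ContinuousLinearMap.coe_restrictScalars', ContinuousLinearMap.smulRight_apply,
    ContinuousLinearMap.one_apply, ContinuousLinearMap.neg_apply,
    ContinuousLinearMap.mulLeftRight_apply, ContinuousLinearEquiv.coe_coe,
    Complex.conjCLE_apply, smul_eq_mul, map_one, hval,
    ContinuousLinearMap.toSpanSingleton_apply, Pi.mul_apply, map_mul, Complex.conj_I]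
  field_simp
  ring_nf
  simp only [Complex.I_sq]
  ring

/-- Explicit formula for the harmonic Schwarzian derivative. -/
theorem schwH_formula
    (h g : ℂ → ℂ)
    (hh : DifferentiableOn ℂ h (ball 0 1)) (hg : DifferentiableOn ℂ g (ball 0 1))
    (hsp : ∀ w ∈ ball (0 : ℂ) 1, ‖dil h g w‖ < 1)
    (hh' : ∀ w ∈ ball (0 : ℂ) 1, deriv h w ≠ 0)
    (z : ℂ) (hz : z ∈ ball (0 : ℂ) 1) :
    schwH h g z = schw h z +
        ((starRingEnd ℂ) (dil h g z) / ((1 - ‖dil h g z‖ ^ 2 : ℝ) : ℂ)) *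
          ((deriv (deriv h) z / deriv h z) * deriv (dil h g) z -
            deriv (deriv (dil h g)) z) -
        (3 / 2) * (deriv (dil h g) z * (starRingEnd ℂ) (dil h g z) /
          ((1 - ‖dil h g z‖ ^ 2 : ℝ) : ℂ)) ^ 2 := by
  have hH : AnalyticOnNhd ℂ h (ball 0 1) := hh.analyticOnNhd isOpen_ball
  have hG : AnalyticOnNhd ℂ g (ball 0 1) := hg.analyticOnNhd isOpen_ball
  have hωA : AnalyticOnNhd ℂ (dil h g) (ball 0 1) :=
    fun w hw => (hG.deriv w hw).div (hH.deriv w hw) (hh' w hw)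
  have hpA : AnalyticOnNhd ℂ (preSch h) (ball 0 1) :=
    fun w hw => (hH.deriv.deriv w hw).div (hH.deriv w hw) (hh' w hw)
  have hωd : HasDerivAt (dil h g) (deriv (dil h g) z) z :=
    ((hωA z hz).differentiableAt).hasDerivAt
  have hω2d : HasDerivAt (deriv (dil h g)) (deriv (deriv (dil h g)) z) z :=
    ((hωA.deriv z hz).differentiableAt).hasDerivAt
  have hpd : HasDerivAt (preSch h) (deriv (preSch h) z) z :=
    ((hpA z hz).differentiableAt).hasDerivAt
  have hd : (1 : ℂ) - dil h g z * (starRingEnd ℂ) (dil h g z) ≠ 0 :=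
    one_sub_mul_conj_ne _ (hsp z hz)
  have hEq : preSchH h g = fun w => preSch h w -
      (starRingEnd ℂ) (dil h g w) * deriv (dil h g) w *
        (1 - dil h g w * (starRingEnd ℂ) (dil h g w))⁻¹ := by
    funext w
    rw [preSchH, norm_cast_conj, div_eq_mul_inv]
  have hP : deriv (deriv h) z / deriv h z = preSch h z := rfl
  simp only [schwH, schw, hEq, hP, norm_cast_conj]
  rw [wZ_core (preSch h) (dil h g) (deriv (dil h g)) z _ _ _ hpd hωd hω2d rfl hd]
  have hd' : (1 : ℂ) - (starRingEnd ℂ) (dil h g z) * dil h g z ≠ 0 := by rwa [mul_comm]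
  field_simp
  ring
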